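/- The Hausdorff dimension of S equals log 3 / log(1/ρ). -/

import Mathlib

/-!
With `d = log 3 / log (1 / ρ)` we have `3 * ρ ^ d = 1`, and `S` is the attractor of three
homotheties of ratio `ρ`.

Upper bound: `S` is covered by the `3 ^ n` copies of `T` of level `n`, each of diameter
`ρ ^ n * diam T`, so `μH[d] S ≤ (diam T) ^ d`.

Lower bound (mass distribution principle): push the uniform Bernoulli measure on `(Fin 3)^ℕ`
forward by the coding map `ω ↦ ∑ (1 - ρ) ρ ^ j v_{ω j}`, whose range lies in `S`. For `ρ ≤ 1/2`
the open triangle satisfies the open set condition, so by comparing volumes a set of diameter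
`≤ ρ ^ k` meets boundedly many level-`k` pieces; hence it has mass `≲ 3 ^ (-k) ≈ diam ^ d`.
-/

open Metric Set Bornology

/-- The vertices of the unit equilateral triangle. -/
noncomputable def v0 : EuclideanSpace ℝ (Fin 2) :=
  (WithLp.equiv 2 (Fin 2 → ℝ)).symm ![0, 0]

noncomputable def v1 : EuclideanSpace ℝ (Fin 2) :=
  (WithLp.equiv 2 (Fin 2 → ℝ)).symm ![1, 0]

noncomputable def v2 : EuclideanSpace ℝ (Fin 2) :=
  (WithLp.equiv 2 (Fin 2 → ℝ)).symm ![1 / 2, Real.sqrt 3 / 2]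

/-- The homothety with center `v0` (resp. `v1`, `v2`) and ratio `ρ`. -/
noncomputable def f0 (ρ : ℝ) (x : EuclideanSpace ℝ (Fin 2)) : EuclideanSpace ℝ (Fin 2) :=
  v0 + ρ • (x - v0)

noncomputable def f1 (ρ : ℝ) (x : EuclideanSpace ℝ (Fin 2)) : EuclideanSpace ℝ (Fin 2) :=
  v1 + ρ • (x - v1)

noncomputable def f2 (ρ : ℝ) (x : EuclideanSpace ℝ (Fin 2)) : EuclideanSpace ℝ (Fin 2) :=
  v2 + ρ • (x - v2)

/-- The union of the images of a set under the three homotheties. -/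
noncomputable def sierpPhi (ρ : ℝ) (X : Set (EuclideanSpace ℝ (Fin 2))) :
    Set (EuclideanSpace ℝ (Fin 2)) :=
  f0 ρ '' X ∪ f1 ρ '' X ∪ f2 ρ '' X

/-- The filled equilateral triangle. -/
noncomputable def sierpT : Set (EuclideanSpace ℝ (Fin 2)) :=
  convexHull ℝ {v0, v1, v2}

/-- The generalized Sierpinski triangle with contraction ratio `ρ`. -/
noncomputable def sierpinski (ρ : ℝ) : Set (EuclideanSpace ℝ (Fin 2)) :=
  ⋂ k : ℕ, (sierpPhi ρ)^[k] sierpT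

open MeasureTheory Filter Topology
open scoped ENNReal

section WordMap

variable {α ι : Type*} (f : ι → α → α)

def wordMap : List ι → α → α
  | [] => id
  | i :: w => f i ∘ wordMap w

@[simp] lemma wordMap_nil : wordMap f [] = id := rfl

@[simp] lemma wordMap_cons (i : ι) (w : List ι) : wordMap f (i :: w) = f i ∘ wordMap f w := rfl

lemma iterate_iUnion_image (n : ℕ) (X : Set α) :
    (fun Y => ⋃ i, f i '' Y)^[n] X = ⋃ w : List.Vector ι n, wordMap f w.1 '' X := by
  induction n with
  | zero =>
    have : Nonempty (List.Vector ι 0) := ⟨List.Vector.nil⟩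
    simp [List.Vector.eq_nil, show (List.Vector.nil : List.Vector ι 0).1 = [] from rfl,
      iUnion_const]
  | succ n ih =>
    ext x
    simp only [Function.iterate_succ_apply', ih, image_iUnion, mem_iUnion]
    constructor
    · rintro ⟨i, w, hx⟩
      exact ⟨w.cons i, by simpa [image_comp] using hx⟩
    · rintro ⟨w, hx⟩
      obtain ⟨i, w, rfl⟩ : ∃ i w', w = List.Vector.cons i w' :=
        ⟨w.head, w.tail, (List.Vector.cons_head_tail w).symm⟩
      exact ⟨i, w, by simpa [image_comp] using hx⟩

lemma mapsTo_wordMap {O : Set α} (hO : ∀ i, MapsTo (f i) O O) (w : List ι) :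
    MapsTo (wordMap f w) O O := by
  induction w with
  | nil => exact mapsTo_id O
  | cons i w ih => exact (hO i).comp ih

lemma disjoint_wordMap_image {O : Set α} (hinj : ∀ i, Function.Injective (f i))
    (hO : ∀ i, MapsTo (f i) O O) (hdisj : Pairwise fun i j => Disjoint (f i '' O) (f j '' O)) :
    ∀ {w w' : List ι}, w.length = w'.length → w ≠ w' →
      Disjoint (wordMap f w '' O) (wordMap f w' '' O)
  | [], [], _, hne => (hne rfl).elim
  | i :: w, i' :: w', hlen, hne => by
    simp only [wordMap_cons, image_comp]
    by_cases hi : i = i'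
    · subst hi
      exact (disjoint_image_iff (hinj i)).2 <|
        disjoint_wordMap_image hinj hO hdisj (by simpa using hlen) (by simpa using hne)
    · exact (hdisj hi).mono (image_mono (mapsTo_wordMap f hO w).image_subset)
        (image_mono (mapsTo_wordMap f hO w').image_subset)

lemma isOpenMap_wordMap [TopologicalSpace α] (hf : ∀ i, IsOpenMap (f i)) (w : List ι) :
    IsOpenMap (wordMap f w) := by
  induction w with
  | nil => exact IsOpenMap.id
  | cons i w ih => exact (hf i).comp ih

structure OpenSetCondition [TopologicalSpace α] (O : Set α) : Prop where
  isOpen : IsOpen O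
  nonempty : O.Nonempty
  mapsTo : ∀ i, MapsTo (f i) O O
  pairwise_disjoint : Pairwise fun i j => Disjoint (f i '' O) (f j '' O)

end WordMap

section Homothety

variable {E ι : Type*} [NormedAddCommGroup E] [NormedSpace ℝ E] (v : ι → E) (ρ : ℝ)

def homothetyFamily (i : ι) : E → E := AffineMap.homothety (v i) ρ

lemma homothetyFamily_apply (i : ι) (x : E) :
    homothetyFamily v ρ i x = (1 - ρ) • v i + ρ • x := by
  simp only [homothetyFamily, AffineMap.homothety_apply, vsub_eq_sub, vadd_eq_add]
  module

variable {v ρ}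

lemma dist_wordMap_homothetyFamily (hρ : 0 ≤ ρ) (w : List ι) (x y : E) :
    dist (wordMap (homothetyFamily v ρ) w x) (wordMap (homothetyFamily v ρ) w y)
      = ρ ^ w.length * dist x y := by
  induction w with
  | nil => simp
  | cons i w ih =>
    simp only [wordMap_cons, Function.comp_apply, List.length_cons, dist_eq_norm,
      homothetyFamily_apply] at ih ⊢
    rw [show (1 - ρ) • v i + ρ • wordMap (homothetyFamily v ρ) w x
        - ((1 - ρ) • v i + ρ • wordMap (homothetyFamily v ρ) w y)
        = ρ • (wordMap (homothetyFamily v ρ) w x - wordMap (homothetyFamily v ρ) w y) by module,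
      norm_smul, ih, Real.norm_of_nonneg hρ, pow_succ]
    ring

lemma ediam_wordMap_homothetyFamily_image_le (hρ : 0 ≤ ρ) (w : List ι) (X : Set E) :
    ediam (wordMap (homothetyFamily v ρ) w '' X) ≤ ENNReal.ofReal (ρ ^ w.length) * ediam X := by
  have hlip : LipschitzWith (ρ ^ w.length).toNNReal (wordMap (homothetyFamily v ρ) w) :=
    LipschitzWith.of_dist_le_mul fun x y => by
      rw [dist_wordMap_homothetyFamily hρ, Real.coe_toNNReal _ (by positivity)]
  exact hlip.ediam_image_le X

lemma addHaar_wordMap_homothetyFamily_image [MeasurableSpace E] [BorelSpace E]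
    [FiniteDimensional ℝ E] (μ : Measure E) [μ.IsAddHaarMeasure] (hρ : 0 ≤ ρ) (w : List ι)
    (s : Set E) :
    μ (wordMap (homothetyFamily v ρ) w '' s)
      = ENNReal.ofReal (ρ ^ (Module.finrank ℝ E * w.length)) * μ s := by
  induction w with
  | nil => simp
  | cons i w ih =>
    rw [wordMap_cons, image_comp, homothetyFamily, Measure.addHaar_image_homothety, ih,
      ← mul_assoc, ← ENNReal.ofReal_mul (abs_nonneg _), abs_of_nonneg (by positivity),
      ← pow_add, List.length_cons, mul_add_one, add_comm]

end Homothety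

lemma hasSum_one_sub_mul_geometric_mul {ρ : ℝ} (hρ0 : 0 ≤ ρ) (hρ1 : ρ < 1) (M : ℝ) :
    HasSum (fun j : ℕ => (1 - ρ) * ρ ^ j * M) M := by
  have h := ((hasSum_geometric_of_lt_one hρ0 hρ1).mul_left (1 - ρ)).mul_right M
  rwa [mul_inv_cancel₀ (sub_ne_zero.2 hρ1.ne'), one_mul] at h

section CodingMap

variable {E ι : Type*} [NormedAddCommGroup E] [NormedSpace ℝ E] [Fintype ι] (v : ι → E) (ρ : ℝ)

/-- Since `homothetyFamily v ρ i x = (1 - ρ) • v i + ρ • x`, this is the limit of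
`wordMap (homothetyFamily v ρ) [ω 0, …, ω (k - 1)] x` as `k → ∞`, for every `x`. -/
noncomputable def codingMap (ω : ℕ → ι) : E := ∑' j, ((1 - ρ) * ρ ^ j) • v (ω j)

variable {v ρ}

lemma norm_codingMap_term_le (hρ0 : 0 ≤ ρ) (hρ1 : ρ < 1) (ω : ℕ → ι) (j : ℕ) :
    ‖((1 - ρ) * ρ ^ j) • v (ω j)‖ ≤ (1 - ρ) * ρ ^ j * ∑ i, ‖v i‖ := by
  rw [norm_smul, Real.norm_of_nonneg (by have := pow_nonneg hρ0 j; nlinarith)]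
  gcongr
  exact Finset.single_le_sum (fun i _ => norm_nonneg (v i)) (Finset.mem_univ (ω j))

lemma norm_codingMap_le (hρ0 : 0 ≤ ρ) (hρ1 : ρ < 1) (ω : ℕ → ι) :
    ‖codingMap v ρ ω‖ ≤ ∑ i, ‖v i‖ :=
  tsum_of_norm_bounded (hasSum_one_sub_mul_geometric_mul hρ0 hρ1 _)
    (norm_codingMap_term_le hρ0 hρ1 ω)

lemma dist_codingMap_le (hρ0 : 0 ≤ ρ) (hρ1 : ρ < 1) (x : E) (ω : ℕ → ι) :
    dist (codingMap v ρ ω) x ≤ ‖x‖ + ∑ i, ‖v i‖ :=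
  (dist_le_norm_add_norm _ _).trans_eq (add_comm _ _) |>.trans
    (add_le_add_right (norm_codingMap_le hρ0 hρ1 ω) _)

variable [CompleteSpace E]

lemma summable_codingMap (hρ0 : 0 ≤ ρ) (hρ1 : ρ < 1) (ω : ℕ → ι) :
    Summable fun j => ((1 - ρ) * ρ ^ j) • v (ω j) :=
  Summable.of_norm_bounded (hasSum_one_sub_mul_geometric_mul hρ0 hρ1 _).summable
    (norm_codingMap_term_le hρ0 hρ1 ω)

lemma codingMap_eq_homothetyFamily (hρ0 : 0 ≤ ρ) (hρ1 : ρ < 1) (ω : ℕ → ι) :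
    codingMap v ρ ω = homothetyFamily v ρ (ω 0) (codingMap v ρ fun n => ω (n + 1)) := by
  rw [codingMap, (summable_codingMap hρ0 hρ1 ω).tsum_eq_zero_add, homothetyFamily_apply,
    codingMap, ← tsum_const_smul'' ρ]
  congr 1
  · simp
  · congr 1 with j
    rw [smul_smul, pow_succ]
    ring_nf

lemma codingMap_eq_wordMap (hρ0 : 0 ≤ ρ) (hρ1 : ρ < 1) (k : ℕ) (ω : ℕ → ι) :
    codingMap v ρ ω
      = wordMap (homothetyFamily v ρ) (List.ofFn fun j : Fin k => ω j)
          (codingMap v ρ fun n => ω (n + k)) := by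
  induction k generalizing ω with
  | zero => simp
  | succ k ih =>
    rw [codingMap_eq_homothetyFamily hρ0 hρ1, ih, List.ofFn_succ, wordMap_cons]
    simp [add_assoc]

lemma codingMap_mem (hρ0 : 0 ≤ ρ) (hρ1 : ρ < 1) {C : Set E} (hC : IsClosed C)
    (hCne : C.Nonempty) (hmaps : ∀ i, MapsTo (homothetyFamily v ρ i) C C) (ω : ℕ → ι) :
    codingMap v ρ ω ∈ C := by
  obtain ⟨c, hc⟩ := hCne
  refine hC.mem_of_tendsto (b := atTop) (f := fun k => wordMap (homothetyFamily v ρ)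
    (List.ofFn fun j : Fin k => ω j) c) ?_ (Eventually.of_forall fun k =>
      mapsTo_wordMap _ hmaps _ hc)
  rw [tendsto_iff_dist_tendsto_zero]
  refine squeeze_zero (fun k => dist_nonneg) (fun k => ?_) (by
    simpa using (tendsto_pow_atTop_nhds_zero_of_lt_one hρ0 hρ1).mul_const (‖c‖ + ∑ i, ‖v i‖))
  rw [codingMap_eq_wordMap hρ0 hρ1 k ω, dist_wordMap_homothetyFamily hρ0, List.length_ofFn]
  gcongr
  rw [dist_comm]
  exact dist_codingMap_le hρ0 hρ1 c _

end CodingMap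

section NaturalMeasure

variable {ι E : Type*} [Fintype ι] [MeasurableSpace ι] [DiscreteMeasurableSpace ι]
  [NormedAddCommGroup E] [NormedSpace ℝ E] [FiniteDimensional ℝ E] [MeasurableSpace E]
  [BorelSpace E] {v : ι → E} {ρ : ℝ}

lemma measurable_codingMap (hρ0 : 0 ≤ ρ) (hρ1 : ρ < 1) : Measurable (codingMap v ρ) :=
  measurable_of_tendsto_metrizable
    (f := fun n ω => ∑ j ∈ Finset.range n, ((1 - ρ) * ρ ^ j) • v (ω j))
    (fun _ => Finset.measurable_sum _ fun j _ =>
      (Measurable.of_discrete (f := fun a : ι => ((1 - ρ) * ρ ^ j) • v a)).comp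
        (measurable_pi_apply j))
    (tendsto_pi_nhds.2 fun ω => (summable_codingMap hρ0 hρ1 ω).hasSum.tendsto_sum_nat)

variable [Nonempty ι]

variable (ι) in
noncomputable def uniformBernoulli : Measure (ℕ → ι) :=
  Measure.infinitePi fun _ => (PMF.uniformOfFintype ι).toMeasure

instance : IsProbabilityMeasure (uniformBernoulli ι) := by
  unfold uniformBernoulli
  infer_instance

lemma uniformBernoulli_prefix_eq_le {k : ℕ} (w : List ι) :
    uniformBernoulli ι {ω | List.ofFn (fun j : Fin k => ω j) = w}
      ≤ (Fintype.card ι : ℝ≥0∞)⁻¹ ^ k := by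
  have hsub : {ω : ℕ → ι | List.ofFn (fun j : Fin k => ω j) = w}
      ⊆ Set.pi (Finset.range k : Set ℕ) fun j => {a | w[j]? = some a} := by
    rintro ω rfl j hj
    simp [Finset.mem_range.1 hj]
  refine (measure_mono hsub).trans ?_
  rw [uniformBernoulli, Measure.infinitePi_pi _ fun j _ => .of_discrete]
  refine (Finset.prod_le_pow_card _ _ _ fun j _ => ?_).trans_eq (by rw [Finset.card_range])
  rcases w[j]? with _ | a
  · simp
  · simp only [Option.some.injEq, ofPred_eq_eq_singleton']
    rw [PMF.toMeasure_apply_singleton _ _ (.singleton a), PMF.uniformOfFintype_apply]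

variable (v ρ) in
noncomputable def naturalMeasure : Measure E := (uniformBernoulli ι).map (codingMap v ρ)

end NaturalMeasure

section Moran

variable {ι E : Type*} [Fintype ι] [NormedAddCommGroup E] [NormedSpace ℝ E] {v : ι → E} {ρ : ℝ}

open scoped Classical in
variable (v ρ) in
noncomputable def piecesMeeting (k : ℕ) (s : Set E) :
    Finset (List.Vector ι k) :=
  Finset.univ.filter fun w =>
    (wordMap (homothetyFamily v ρ) w.1 '' range (codingMap v ρ) ∩ s).Nonempty

lemma mem_piecesMeeting {k : ℕ} {s : Set E} {w : List.Vector ι k} :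
    w ∈ piecesMeeting v ρ k s
      ↔ (wordMap (homothetyFamily v ρ) w.1 '' range (codingMap v ρ) ∩ s).Nonempty := by
  simp [piecesMeeting]

lemma wordMap_image_ball_subset_closedBall (hρ0 : 0 ≤ ρ) (hρ1 : ρ < 1) {w : List ι} {x₀ p : E}
    {r : ℝ} (ω : ℕ → ι)
    (hp : dist (wordMap (homothetyFamily v ρ) w (codingMap v ρ ω)) p ≤ ρ ^ w.length) :
    wordMap (homothetyFamily v ρ) w '' ball x₀ r
      ⊆ closedBall p (ρ ^ w.length * (r + (‖x₀‖ + ∑ i, ‖v i‖) + 1)) := by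
  rintro _ ⟨z, hz, rfl⟩
  have hz : dist z (codingMap v ρ ω) ≤ r + (‖x₀‖ + ∑ i, ‖v i‖) :=
    (dist_triangle _ x₀ _).trans (add_le_add (mem_ball.1 hz).le
      (by rw [dist_comm]; exact dist_codingMap_le hρ0 hρ1 x₀ ω))
  rw [mem_closedBall]
  calc _ ≤ dist (wordMap (homothetyFamily v ρ) w z)
        (wordMap (homothetyFamily v ρ) w (codingMap v ρ ω))
        + dist (wordMap (homothetyFamily v ρ) w (codingMap v ρ ω)) p := dist_triangle _ _ _
    _ ≤ ρ ^ w.length * (r + (‖x₀‖ + ∑ i, ‖v i‖)) + ρ ^ w.length := by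
      rw [dist_wordMap_homothetyFamily hρ0]
      gcongr
    _ = _ := by ring

variable [FiniteDimensional ℝ E] [MeasurableSpace E] [BorelSpace E] {O : Set E}

/-- The level-`k` pieces meeting `s` carry pairwise disjoint copies of a ball `B(x₀, r) ⊆ O`
scaled by `ρ ^ k`, all inside a ball of radius `ρ ^ k * R` around `s`: compare volumes. -/
lemma exists_card_piecesMeeting_le (hρ0 : 0 < ρ) (hρ1 : ρ < 1)
    (hO : OpenSetCondition (homothetyFamily v ρ) O) :
    ∃ C : ℝ≥0∞, C ≠ ∞ ∧ ∀ (k : ℕ) (s : Set E), ediam s ≤ ENNReal.ofReal (ρ ^ k) →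
      ((piecesMeeting v ρ k s).card : ℝ≥0∞) ≤ C := by
  obtain ⟨x₀, hx₀⟩ := hO.nonempty
  obtain ⟨r, hr, hball⟩ := isOpen_iff.1 hO.isOpen x₀ hx₀
  set R := r + (‖x₀‖ + ∑ i, ‖v i‖) + 1
  let μ : Measure E := Measure.addHaar
  have hμball : μ (ball x₀ r) ≠ 0 := (measure_ball_pos μ x₀ hr).ne'
  refine ⟨μ (closedBall 0 R) / μ (ball x₀ r),
    ENNReal.div_ne_top measure_closedBall_lt_top.ne hμball, fun k s hs => ?_⟩
  set W := piecesMeeting v ρ k s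
  rcases s.eq_empty_or_nonempty with rfl | ⟨p, hp⟩
  · simp [W, piecesMeeting]
  set F := fun w : List.Vector ι k => wordMap (homothetyFamily v ρ) w.1
  have hsub : ∀ w ∈ W, F w '' ball x₀ r ⊆ closedBall p (ρ ^ k * R) := by
    intro w hw
    obtain ⟨_, ⟨_, ⟨ω, rfl⟩, rfl⟩, hq⟩ := mem_piecesMeeting.1 hw
    rw [← w.2]
    refine wordMap_image_ball_subset_closedBall hρ0.le hρ1 ω ?_
    rw [← ENNReal.ofReal_le_ofReal_iff (by positivity), ← edist_dist, w.2]
    exact (edist_le_ediam_of_mem hq hp).trans hs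
  have hpd : (W : Set (List.Vector ι k)).PairwiseDisjoint fun w => F w '' ball x₀ r :=
    fun w _ w' _ hne => (disjoint_wordMap_image _ (fun i => AffineMap.homothety_injective _
      hρ0.ne') hO.mapsTo hO.pairwise_disjoint (by simp) (fun h => hne (Subtype.ext h))).mono
        (image_mono hball) (image_mono hball)
  have hvol : ENNReal.ofReal (ρ ^ (Module.finrank ℝ E * k)) * ((W.card : ℝ≥0∞) * μ (ball x₀ r))
      ≤ ENNReal.ofReal (ρ ^ (Module.finrank ℝ E * k)) * μ (closedBall 0 R) := calc
    _ = ∑ w ∈ W, μ (F w '' ball x₀ r) := by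
      rw [Finset.sum_congr rfl fun w _ => by rw [addHaar_wordMap_homothetyFamily_image μ hρ0.le,
        w.2], Finset.sum_const, nsmul_eq_mul]
      ring
    _ = μ (⋃ w ∈ W, F w '' ball x₀ r) :=
      (measure_biUnion_finset hpd fun w _ => (isOpenMap_wordMap _ (fun i =>
        AffineMap.homothety_isOpenMap _ _ hρ0.ne') _ _ isOpen_ball).measurableSet).symm
    _ ≤ μ (closedBall p (ρ ^ k * R)) := measure_mono (iUnion₂_subset hsub)
    _ = _ := by rw [Measure.addHaar_closedBall_mul μ p (by positivity) (by positivity), ← pow_mul,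
        mul_comm k]
  rw [ENNReal.mul_le_mul_iff_right (by simp [hρ0]) ENNReal.ofReal_ne_top] at hvol
  exact (ENNReal.le_div_iff_mul_le (Or.inl hμball) (Or.inl measure_ball_lt_top.ne)).2 hvol

end Moran

section MassDistribution

variable {ι E : Type*} [Fintype ι] [Nonempty ι] [MeasurableSpace ι] [DiscreteMeasurableSpace ι]
  [NormedAddCommGroup E] [NormedSpace ℝ E] [FiniteDimensional ℝ E] [MeasurableSpace E]
  [BorelSpace E] {v : ι → E} {ρ : ℝ} {O : Set E}

lemma exists_naturalMeasure_le_inv_card_pow (hρ0 : 0 < ρ) (hρ1 : ρ < 1)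
    (hO : OpenSetCondition (homothetyFamily v ρ) O) :
    ∃ C : ℝ≥0∞, C ≠ ∞ ∧ ∀ (k : ℕ) (s : Set E), ediam s ≤ ENNReal.ofReal (ρ ^ k) →
      naturalMeasure v ρ s ≤ C * (Fintype.card ι : ℝ≥0∞)⁻¹ ^ k := by
  obtain ⟨C, hC, hcount⟩ := exists_card_piecesMeeting_le hρ0 hρ1 hO
  refine ⟨C, hC, fun k s hs => ?_⟩
  set W := piecesMeeting v ρ k (closure s)
  have hcover : codingMap v ρ ⁻¹' closure s
      ⊆ ⋃ w ∈ W, {ω | List.ofFn (fun j : Fin k => ω j) = w.1} := by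
    intro ω hω
    refine mem_iUnion₂.2 ⟨⟨_, List.length_ofFn⟩, mem_piecesMeeting.2
      ⟨codingMap v ρ ω, ⟨_, mem_range_self fun n => ω (n + k), ?_⟩, hω⟩, rfl⟩
    exact (codingMap_eq_wordMap hρ0.le hρ1 k ω).symm
  calc naturalMeasure v ρ s ≤ naturalMeasure v ρ (closure s) := measure_mono subset_closure
    _ = uniformBernoulli ι (codingMap v ρ ⁻¹' closure s) :=
      Measure.map_apply (measurable_codingMap hρ0.le hρ1) isClosed_closure.measurableSet
    _ ≤ ∑ w ∈ W, uniformBernoulli ι {ω | List.ofFn (fun j : Fin k => ω j) = w.1} :=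
      (measure_mono hcover).trans (measure_biUnion_finset_le _ _)
    _ ≤ ∑ _w ∈ W, (Fintype.card ι : ℝ≥0∞)⁻¹ ^ k :=
      Finset.sum_le_sum fun w _ => uniformBernoulli_prefix_eq_le w.1
    _ ≤ C * (Fintype.card ι : ℝ≥0∞)⁻¹ ^ k := by
      rw [Finset.sum_const, nsmul_eq_mul]
      gcongr
      exact hcount k (closure s) (by rwa [ediam_closure])

lemma exists_naturalMeasure_le_ediam_rpow (hρ0 : 0 < ρ) (hρ1 : ρ < 1)
    (hO : OpenSetCondition (homothetyFamily v ρ) O)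
    {d : ℝ} (hd0 : 0 < d) (hd : Fintype.card ι * ρ ^ d = 1) :
    ∃ C : ℝ≥0∞, C ≠ ∞ ∧ ∀ s : Set E, ediam s ≤ 1 → naturalMeasure v ρ s ≤ C * ediam s ^ d := by
  obtain ⟨C, hC, hle⟩ := exists_naturalMeasure_le_inv_card_pow hρ0 hρ1 hO
  have hq : (Fintype.card ι : ℝ≥0∞)⁻¹ = ENNReal.ofReal (ρ ^ d) := by
    rw [eq_inv_of_mul_eq_one_right hd, ENNReal.ofReal_inv_of_pos (by positivity),
      ENNReal.ofReal_natCast]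
  have hqk (k : ℕ) : (Fintype.card ι : ℝ≥0∞)⁻¹ ^ k = ENNReal.ofReal ((ρ ^ k) ^ d) := by
    rw [hq, ← ENNReal.ofReal_pow (by positivity), ← Real.rpow_natCast, ← Real.rpow_natCast,
      ← Real.rpow_mul hρ0.le, ← Real.rpow_mul hρ0.le, mul_comm]
  refine ⟨C * Fintype.card ι, ENNReal.mul_ne_top hC (ENNReal.natCast_ne_top _), fun s hs => ?_⟩
  rcases eq_or_ne (ediam s) 0 with hs0 | hs0
  · have hq1 : (Fintype.card ι : ℝ≥0∞)⁻¹ < 1 := by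
      rw [hq, ENNReal.ofReal_lt_one]
      exact Real.rpow_lt_one hρ0.le hρ1 hd0
    have hlim := ENNReal.Tendsto.const_mul (ENNReal.tendsto_pow_atTop_nhds_zero_of_lt_one hq1)
      (Or.inr hC)
    rw [mul_zero] at hlim
    have := ge_of_tendsto' hlim fun k => hle k s (by simp [hs0])
    simp_all
  · set δ := (ediam s).toReal
    have hδ : ediam s = ENNReal.ofReal δ := (ENNReal.ofReal_toReal (ne_top_of_le_ne_top
      ENNReal.one_ne_top hs)).symm
    obtain ⟨k, hk1, hk2⟩ := exists_nat_pow_near_of_lt_one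
      (ENNReal.toReal_pos hs0 (ne_top_of_le_ne_top ENNReal.one_ne_top hs))
      (ENNReal.toReal_le_of_le_ofReal zero_le_one (by simpa using hs)) hρ0 hρ1
    calc naturalMeasure v ρ s ≤ C * (Fintype.card ι : ℝ≥0∞)⁻¹ ^ k :=
          hle k s (hδ ▸ ENNReal.ofReal_le_ofReal hk2)
      _ = C * Fintype.card ι * (Fintype.card ι : ℝ≥0∞)⁻¹ ^ (k + 1) := by
          rw [pow_succ, mul_assoc C, mul_comm _ (_ ^ k * _), mul_assoc,
            ENNReal.inv_mul_cancel (by simp) (ENNReal.natCast_ne_top _), mul_one]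
      _ ≤ C * Fintype.card ι * ediam s ^ d := by
          rw [hqk, hδ, ENNReal.ofReal_rpow_of_nonneg ENNReal.toReal_nonneg hd0.le]
          gcongr

theorem hausdorffMeasure_range_codingMap_ne_zero (hρ0 : 0 < ρ) (hρ1 : ρ < 1)
    (hO : OpenSetCondition (homothetyFamily v ρ) O)
    {d : ℝ} (hd0 : 0 < d) (hd : Fintype.card ι * ρ ^ d = 1) :
    μH[d] (range (codingMap v ρ)) ≠ 0 := by
  obtain ⟨C, hC, hle⟩ := exists_naturalMeasure_le_ediam_rpow hρ0 hρ1 hO hd0 hd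
  have hmass : C⁻¹ • naturalMeasure v ρ ≤ μH[d] :=
    Measure.le_hausdorffMeasure d _ 1 one_pos fun s hs => by
      rw [Measure.smul_apply, smul_eq_mul, mul_comm, ← div_eq_mul_inv]
      exact ENNReal.div_le_of_le_mul' (hle s hs)
  have hrange : 1 ≤ naturalMeasure v ρ (range (codingMap v ρ)) := by
    have := Measure.le_map_apply (measurable_codingMap (v := v) hρ0.le hρ1).aemeasurable
      (μ := uniformBernoulli ι) (range (codingMap v ρ))
    rwa [preimage_range, measure_univ] at this
  refine ((ENNReal.inv_pos.2 hC).trans_le ?_).ne'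
  calc C⁻¹ ≤ C⁻¹ * naturalMeasure v ρ (range (codingMap v ρ)) := le_mul_of_one_le_right' hrange
    _ ≤ μH[d] (range (codingMap v ρ)) := hmass _

end MassDistribution

section UpperBound

variable {ι E : Type*} [Fintype ι] [NormedAddCommGroup E] [NormedSpace ℝ E] {v : ι → E} {ρ : ℝ}
  {d : ℝ}

lemma sum_ediam_wordMap_image_rpow_le (hρ0 : 0 ≤ ρ) (hd0 : 0 ≤ d)
    (hd : Fintype.card ι * ρ ^ d = 1) (n : ℕ) (X : Set E) :
    ∑ w : List.Vector ι n, ediam (wordMap (homothetyFamily v ρ) w.1 '' X) ^ d ≤ ediam X ^ d := by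
  calc ∑ w : List.Vector ι n, ediam (wordMap (homothetyFamily v ρ) w.1 '' X) ^ d
      ≤ ∑ _w : List.Vector ι n, (ENNReal.ofReal (ρ ^ n) * ediam X) ^ d :=
        Finset.sum_le_sum fun w _ => ENNReal.rpow_le_rpow
          ((ediam_wordMap_homothetyFamily_image_le hρ0 w.1 X).trans_eq (by rw [w.2])) hd0
    _ = ENNReal.ofReal ((Fintype.card ι * ρ ^ d) ^ n) * ediam X ^ d := by
      rw [Finset.sum_const, Finset.card_univ, card_vector, nsmul_eq_mul,
        ENNReal.mul_rpow_of_nonneg _ _ hd0, ENNReal.ofReal_rpow_of_nonneg (by positivity) hd0,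
        ← mul_assoc, mul_pow, ENNReal.ofReal_mul (by positivity),
        ENNReal.ofReal_pow (by positivity),
        ENNReal.ofReal_natCast, ← Real.rpow_natCast, ← Real.rpow_natCast, ← Real.rpow_mul hρ0,
        ← Real.rpow_mul hρ0, mul_comm d]
      push_cast
      ring
    _ = ediam X ^ d := by rw [hd, one_pow, ENNReal.ofReal_one, one_mul]

variable [MeasurableSpace E] [BorelSpace E]

theorem hausdorffMeasure_iInter_iterate_le (hρ0 : 0 ≤ ρ) (hρ1 : ρ < 1) (hd0 : 0 ≤ d)
    (hd : Fintype.card ι * ρ ^ d = 1) {X : Set E} (hX : IsBounded X) :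
    μH[d] (⋂ k, (fun Y => ⋃ i, homothetyFamily v ρ i '' Y)^[k] X) ≤ ediam X ^ d := by
  have hr : Tendsto (fun n : ℕ => ENNReal.ofReal (ρ ^ n) * ediam X) atTop (𝓝 0) := by
    simpa using ENNReal.Tendsto.mul_const (ENNReal.tendsto_ofReal
      (tendsto_pow_atTop_nhds_zero_of_lt_one hρ0 hρ1)) (Or.inr hX.ediam_ne_top)
  calc μH[d] (⋂ k, (fun Y => ⋃ i, homothetyFamily v ρ i '' Y)^[k] X)
      ≤ liminf (fun n => ∑ w : List.Vector ι n,
          ediam (wordMap (homothetyFamily v ρ) w.1 '' X) ^ d) atTop :=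
        Measure.hausdorffMeasure_le_liminf_sum d _ _ hr
          (fun n (w : List.Vector ι n) => wordMap (homothetyFamily v ρ) w.1 '' X)
          (Eventually.of_forall fun n w =>
            (ediam_wordMap_homothetyFamily_image_le hρ0 w.1 X).trans_eq (by rw [w.2]))
          (Eventually.of_forall fun n =>
            (iInter_subset _ n).trans (iterate_iUnion_image _ n X).subset)
    _ ≤ liminf (fun _ => ediam X ^ d) atTop :=
        liminf_le_liminf (Eventually.of_forall fun n =>
          sum_ediam_wordMap_image_rpow_le hρ0 hd0 hd n X)
    _ = ediam X ^ d := liminf_const _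

end UpperBound

lemma mul_rpow_log_div_log_inv_eq_one {N ρ : ℝ} (hN : 0 < N) (hρ0 : 0 < ρ) (hρ1 : ρ < 1) :
    N * ρ ^ (Real.log N / Real.log (1 / ρ)) = 1 := by
  have hlog : Real.log ρ ≠ 0 := (Real.log_neg hρ0 hρ1).ne
  rw [Real.rpow_def_of_pos hρ0, one_div, Real.log_inv, div_neg, mul_neg, mul_div_cancel₀ _ hlog,
    Real.exp_neg, Real.exp_log hN, mul_inv_cancel₀ hN.ne']

namespace Sierpinski

abbrev E₂ := EuclideanSpace ℝ (Fin 2)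

noncomputable def vertex : Fin 3 → E₂ := ![v0, v1, v2]

lemma sierpPhi_eq (ρ : ℝ) :
    sierpPhi ρ = fun X => ⋃ i, homothetyFamily vertex ρ i '' X := by
  have h : ∀ (c x : E₂), c + ρ • (x - c) = AffineMap.homothety c ρ x := fun c x => by
    rw [AffineMap.homothety_apply, vsub_eq_sub, vadd_eq_add, add_comm]
  ext X x
  simp [sierpPhi, f0, f1, f2, homothetyFamily, vertex, Fin.exists_fin_succ, h, or_assoc]

lemma sierpinski_eq (ρ : ℝ) :
    sierpinski ρ = ⋂ k, (fun X => ⋃ i, homothetyFamily vertex ρ i '' X)^[k] sierpT := by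
  rw [sierpinski, sierpPhi_eq]

lemma vertex_mem_sierpT (i : Fin 3) : vertex i ∈ sierpT :=
  subset_convexHull ℝ _ (by fin_cases i <;> simp [vertex])

lemma isCompact_sierpT : IsCompact sierpT :=
  (toFinite _).isCompact_convexHull (𝕜 := ℝ)

lemma mapsTo_homothetyFamily_sierpT {ρ : ℝ} (hρ0 : 0 ≤ ρ) (hρ1 : ρ ≤ 1) (i : Fin 3) :
    MapsTo (homothetyFamily vertex ρ i) sierpT sierpT := fun x hx => by
  rw [homothetyFamily, AffineMap.homothety_eq_lineMap]
  exact (convex_convexHull ℝ _).lineMap_mem (vertex_mem_sierpT i) hx ⟨hρ0, hρ1⟩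

lemma range_codingMap_subset_sierpinski {ρ : ℝ} (hρ0 : 0 ≤ ρ) (hρ1 : ρ < 1) :
    range (codingMap vertex ρ) ⊆ sierpinski ρ := by
  rintro _ ⟨ω, rfl⟩
  rw [sierpinski_eq, mem_iInter]
  intro k
  rw [iterate_iUnion_image, codingMap_eq_wordMap hρ0 hρ1 k ω]
  exact mem_iUnion.2 ⟨⟨_, List.length_ofFn⟩, mem_image_of_mem _ (codingMap_mem hρ0 hρ1
    isCompact_sierpT.isClosed ⟨_, vertex_mem_sierpT 0⟩
    (mapsTo_homothetyFamily_sierpT hρ0 hρ1.le) _)⟩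

noncomputable def baryCoord (x : E₂) : Fin 3 → ℝ :=
  ![1 - x 0 - x 1 / √3, x 0 - x 1 / √3, 2 * x 1 / √3]

lemma baryCoord_vertex (i j : Fin 3) : baryCoord (vertex j) i = if i = j then 1 else 0 := by
  have h3 : √3 ≠ 0 := by positivity
  fin_cases i <;> fin_cases j <;>
    simp only [baryCoord, vertex, v0, v1, v2, WithLp.equiv_symm_apply, Matrix.cons_val_zero,
      Matrix.cons_val_one, Matrix.cons_val, Matrix.cons_val_fin_one, Fin.isValue, Fin.zero_eta,
      Fin.mk_one, Fin.reduceFinMk, Fin.reduceEq, ↓reduceIte] <;> field_simp <;> ring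

lemma baryCoord_add_smul (a b : ℝ) (x y : E₂) (i : Fin 3) (hab : a + b = 1) :
    baryCoord (a • x + b • y) i = a * baryCoord x i + b * baryCoord y i := by
  obtain rfl : b = 1 - a := by linarith
  fin_cases i <;> simp only [baryCoord, PiLp.add_apply, PiLp.smul_apply, smul_eq_mul,
    Matrix.cons_val_zero, Matrix.cons_val_one, Matrix.cons_val, Fin.isValue, Fin.zero_eta,
    Fin.mk_one, Fin.reduceFinMk] <;> ring

lemma sum_baryCoord (x : E₂) : ∑ i, baryCoord x i = 1 := by
  have h3 : √3 ≠ 0 := by positivity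
  simp only [baryCoord, Fin.sum_univ_three, Matrix.cons_val_zero, Matrix.cons_val_one,
    Matrix.cons_val, Fin.isValue]
  field_simp
  ring

lemma continuous_baryCoord (i : Fin 3) : Continuous fun x => baryCoord x i := by
  fin_cases i <;> simp only [baryCoord] <;> fun_prop

lemma baryCoord_homothetyFamily (ρ : ℝ) (j : Fin 3) (x : E₂) (i : Fin 3) :
    baryCoord (homothetyFamily vertex ρ j x) i
      = (1 - ρ) * (if i = j then 1 else 0) + ρ * baryCoord x i := by
  rw [homothetyFamily_apply, baryCoord_add_smul _ _ _ _ _ (by ring), baryCoord_vertex]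

def openTriangle : Set E₂ := {x | ∀ i, 0 < baryCoord x i}

lemma baryCoord_lt_one {x : E₂} (hx : x ∈ openTriangle) (i : Fin 3) : baryCoord x i < 1 := by
  have h := sum_baryCoord x
  rw [Fin.sum_univ_three] at h
  fin_cases i <;> simp only [Fin.zero_eta, Fin.mk_one, Fin.reduceFinMk, Fin.isValue] <;>
    linarith [hx 0, hx 1, hx 2]

lemma openSetCondition_openTriangle {ρ : ℝ} (hρ0 : 0 < ρ) (hρ : ρ ≤ 1 / 2) :
    OpenSetCondition (homothetyFamily vertex ρ) openTriangle where
  isOpen := by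
    simp only [openTriangle, ofPred_forall]
    exact isOpen_iInter_of_finite fun i => isOpen_lt continuous_const (continuous_baryCoord i)
  nonempty := by
    refine ⟨!₂[1 / 2, √3 / 6], fun i => ?_⟩
    have h3 : √3 ≠ 0 := by positivity
    fin_cases i <;> simp only [baryCoord, Matrix.cons_val_zero, Matrix.cons_val_one,
      Matrix.cons_val, Matrix.cons_val_fin_one, Fin.isValue, Fin.zero_eta, Fin.mk_one,
      Fin.reduceFinMk] <;> field_simp <;> norm_num
  mapsTo i x hx j := by
    rw [baryCoord_homothetyFamily]
    have := hx j
    split_ifs <;> nlinarith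
  -- the `i`-th coordinate exceeds `1 - ρ ≥ 1/2` on the `i`-th image, and is below `ρ ≤ 1/2`
  -- on the others
  pairwise_disjoint i j hij := disjoint_left.2 <| by
    rintro _ ⟨x, hx, rfl⟩ ⟨y, hy, hyx⟩
    have h := congrArg (baryCoord · i) hyx
    simp only [baryCoord_homothetyFamily, if_neg hij, ↓reduceIte] at h
    nlinarith [hx i, hy i, baryCoord_lt_one hy i]

lemma card_fin_three_mul_rpow_eq_one {ρ : ℝ} (hρ0 : 0 < ρ) (hρ1 : ρ < 1) :
    (Fintype.card (Fin 3) : ℝ) * ρ ^ (Real.log 3 / Real.log (1 / ρ)) = 1 := by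
  simpa using mul_rpow_log_div_log_inv_eq_one (N := 3) (by norm_num) hρ0 hρ1

lemma log_three_div_log_inv_pos {ρ : ℝ} (hρ0 : 0 < ρ) (hρ1 : ρ < 1) :
    0 < Real.log 3 / Real.log (1 / ρ) :=
  div_pos (Real.log_pos (by norm_num)) (Real.log_pos ((one_lt_div hρ0).2 hρ1))

lemma hausdorffMeasure_sierpinski_ne_top {ρ : ℝ} (hρ0 : 0 < ρ) (hρ1 : ρ < 1) :
    μH[Real.log 3 / Real.log (1 / ρ)] (sierpinski ρ) ≠ ∞ := by
  rw [sierpinski_eq]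
  have hd0 := (log_three_div_log_inv_pos hρ0 hρ1).le
  exact ne_top_of_le_ne_top (ENNReal.rpow_ne_top_of_nonneg hd0
    isCompact_sierpT.isBounded.ediam_ne_top) (hausdorffMeasure_iInter_iterate_le hρ0.le hρ1
      hd0 (card_fin_three_mul_rpow_eq_one hρ0 hρ1) isCompact_sierpT.isBounded)

lemma hausdorffMeasure_sierpinski_ne_zero {ρ : ℝ} (hρ0 : 0 < ρ) (hρ : ρ ≤ 1 / 2) :
    μH[Real.log 3 / Real.log (1 / ρ)] (sierpinski ρ) ≠ 0 := by
  have hρ1 : ρ < 1 := hρ.trans_lt (by norm_num)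
  refine ne_bot_of_le_ne_bot ?_ (measure_mono (range_codingMap_subset_sierpinski hρ0.le hρ1))
  exact hausdorffMeasure_range_codingMap_ne_zero hρ0 hρ1 (openSetCondition_openTriangle hρ0 hρ)
    (log_three_div_log_inv_pos hρ0 hρ1) (card_fin_three_mul_rpow_eq_one hρ0 hρ1)

end Sierpinski

theorem sierpinski_dimH (ρ : ℝ) (hρ0 : 0 < ρ) (hρ : ρ ≤ 1 / 2) :
    dimH (sierpinski ρ) = ENNReal.ofReal (Real.log 3 / Real.log (1 / ρ)) := by
  have hρ1 : ρ < 1 := hρ.trans_lt (by norm_num)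
  have hd := Real.coe_toNNReal _ (Sierpinski.log_three_div_log_inv_pos hρ0 hρ1).le
  refine dimH_of_hausdorffMeasure_ne_zero_ne_top ?_ ?_
  · rw [hd]
    exact Sierpinski.hausdorffMeasure_sierpinski_ne_zero hρ0 hρ
  · rw [hd]
    exact Sierpinski.hausdorffMeasure_sierpinski_ne_top hρ0 hρ1
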